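/- Let θ ∈ (0, π/2), t = tan θ, and define unit product vectors in ℂ²⊗ℂ²: φ₁ = (a|0⟩ + e^{2πi/3}b|1⟩)⊗(a|0⟩ + e^{πi/3}b|1⟩), φ₂ = (a|0⟩ + e^{4πi/3}b|1⟩)⊗(a|0⟩ + e^{5πi/3}b|1⟩), φ₃ = (a|0⟩ + b|1⟩)⊗(a|0⟩ − b|1⟩), where a = 1/√(1+tan θ) and b = 1/√(1+cot θ). Then (1/3)·Σ_{k=1}^{3} |φ_k⟩⟨φ_k| equals (1/(1+t)²)·N, where N is the 4×4 matrix in basis ordering |00⟩,|01⟩,|10⟩,|11⟩ with diagonal (1, t, t, t²), entries −t in positions (0,3) and (3,0), and zeros elsewhere. Consequently Ω₃ = (1/3)·Σ_{k=1}^{3}(I₄ − |φ_k⟩⟨φ_k|) = I₄ − (1/(1+t)²)·N, and each φ_k is orthogonal to ψ_θ = sin θ|00⟩ + cos θ|11⟩. -/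

import Mathlib

/-!
Write `ω = e^{2πi/3}`. Since `e^{πi/3} = -ω²`, `e^{4πi/3} = ω²` and `e^{5πi/3} = -ω`, the three
vectors are `(a|0⟩ + ωᵏ b|1⟩) ⊗ (a|0⟩ - ω⁻ᵏ b|1⟩)` for `k = 1, 2, 0`. Up to sign, the
`(ij, i'j')` entry of the `k`-th projector carries the phase `ω^{k((i - j) - (i' - j'))}`, so
averaging over `k` kills every entry with `i - j ≠ i' - j'`; only the diagonal and the
`|00⟩⟨11|` corners survive, and `a² = 1/(1 + t)`, `b² = t/(1 + t)` give `N/(1 + t)²`. The two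
phases of each vector multiply to `-1`, so orthogonality to `ψ_θ` reduces to
`sin θ · a² = cos θ · b²`.
-/

open Matrix

/-- The state `ψ_θ = sin θ·|00⟩ + cos θ·|11⟩` in `ℂ²⊗ℂ²`. -/
noncomputable def psiTheta (θ : ℝ) : Fin 2 × Fin 2 → ℂ :=
  fun p => if p = (0, 0) then (Real.sin θ : ℂ)
    else if p = (1, 1) then (Real.cos θ : ℂ) else 0

/-- `a = 1/√(1 + tan θ)`. -/
noncomputable def ampA (θ : ℝ) : ℝ := 1 / Real.sqrt (1 + Real.tan θ)

/-- `b = 1/√(1 + cot θ)`. -/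
noncomputable def ampB (θ : ℝ) : ℝ := 1 / Real.sqrt (1 + Real.cos θ / Real.sin θ)

/-- The product vector `(a|0⟩ + ωu·b|1⟩) ⊗ (a|0⟩ + ωv·b|1⟩)`. -/
noncomputable def prodVec (θ : ℝ) (ωu ωv : ℂ) : Fin 2 × Fin 2 → ℂ :=
  fun p => (if p.1 = 0 then (ampA θ : ℂ) else ωu * (ampB θ : ℂ))
    * (if p.2 = 0 then (ampA θ : ℂ) else ωv * (ampB θ : ℂ))

/-- `φ₁`. -/
noncomputable def phi1 (θ : ℝ) : Fin 2 × Fin 2 → ℂ :=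
  prodVec θ (Complex.exp (2 * Real.pi * Complex.I / 3)) (Complex.exp (Real.pi * Complex.I / 3))

/-- `φ₂`. -/
noncomputable def phi2 (θ : ℝ) : Fin 2 × Fin 2 → ℂ :=
  prodVec θ (Complex.exp (4 * Real.pi * Complex.I / 3)) (Complex.exp (5 * Real.pi * Complex.I / 3))

/-- `φ₃`. -/
noncomputable def phi3 (θ : ℝ) : Fin 2 × Fin 2 → ℂ :=
  prodVec θ 1 (-1)

/-- The matrix `N` with diagonal `(1, t, t, t²)`, entries `−t` in the `(|00⟩,|11⟩)` corners,
and zeros elsewhere. -/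
noncomputable def Nmat (t : ℝ) : Matrix (Fin 2 × Fin 2) (Fin 2 × Fin 2) ℂ :=
  Matrix.of fun p q =>
    if p = (0, 0) ∧ q = (0, 0) then 1
    else if p = (0, 1) ∧ q = (0, 1) then (t : ℂ)
    else if p = (1, 0) ∧ q = (1, 0) then (t : ℂ)
    else if p = (1, 1) ∧ q = (1, 1) then ((t ^ 2 : ℝ) : ℂ)
    else if (p = (0, 0) ∧ q = (1, 1)) ∨ (p = (1, 1) ∧ q = (0, 0)) then ((-t : ℝ) : ℂ)
    else 0

theorem IsPrimitiveRoot.star_eq_sq {ω : ℂ} (hω : IsPrimitiveRoot ω 3) : star ω = ω ^ 2 := by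
  rw [RCLike.star_def, ← Complex.inv_eq_conj (hω.norm'_eq_one three_ne_zero)]
  exact inv_eq_of_mul_eq_one_right (by rw [← pow_succ', hω.pow_eq_one])

theorem IsPrimitiveRoot.sq_add_self_add_one {ω : ℂ} (hω : IsPrimitiveRoot ω 3) :
    ω ^ 2 + ω + 1 = 0 := by
  have h := hω.geom_sum_eq_zero (by norm_num)
  simp only [Finset.sum_range_succ, Finset.sum_range_zero] at h
  linear_combination h

section Phases

open Complex Real

local notation "ω" => Complex.exp (2 * π * I / 3)

theorem isPrimitiveRoot_exp_two_pi_I_div_three : IsPrimitiveRoot ω 3 := by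
  simpa using Complex.isPrimitiveRoot_exp 3 three_ne_zero

theorem exp_four_pi_I_div_three : Complex.exp (4 * π * I / 3) = ω ^ 2 := by
  rw [← Complex.exp_nat_mul]; ring_nf

theorem exp_five_pi_I_div_three : Complex.exp (5 * π * I / 3) = -ω := by
  rw [show 5 * π * I / 3 = 2 * π * I / 3 + π * I by ring, Complex.exp_add, exp_pi_mul_I]; ring

theorem exp_pi_I_div_three : Complex.exp (π * I / 3) = -ω ^ 2 := by
  rw [← exp_four_pi_I_div_three, show 4 * π * I / 3 = π * I / 3 + π * I by ring,
    Complex.exp_add, exp_pi_mul_I]; ring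

theorem phi1_eq (θ : ℝ) : phi1 θ = prodVec θ ω (-ω ^ 2) := by
  rw [phi1, exp_pi_I_div_three]

theorem phi2_eq (θ : ℝ) : phi2 θ = prodVec θ (ω ^ 2) (-ω) := by
  rw [phi2, exp_four_pi_I_div_three, exp_five_pi_I_div_three]

end Phases

section Amplitudes

open Real

theorem ampA_sq {θ : ℝ} (hθ : θ ∈ Set.Ioo 0 (π / 2)) : ampA θ ^ 2 = 1 / (1 + tan θ) := by
  rw [ampA, div_pow, one_pow,
    sq_sqrt (by linarith [tan_pos_of_pos_of_lt_pi_div_two hθ.1 hθ.2])]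

theorem ampB_sq {θ : ℝ} (hθ : θ ∈ Set.Ioo 0 (π / 2)) : ampB θ ^ 2 = tan θ / (1 + tan θ) := by
  have hsin : 0 < sin θ := sin_pos_of_pos_of_lt_pi hθ.1 (by linarith [hθ.2, pi_pos])
  have hcos : 0 < cos θ := cos_pos_of_mem_Ioo ⟨by linarith [hθ.1, pi_pos], hθ.2⟩
  rw [ampB, div_pow, one_pow, sq_sqrt (by positivity), tan_eq_sin_div_cos]
  field_simp
  ring

theorem ampA_sq_add_ampB_sq {θ : ℝ} (hθ : θ ∈ Set.Ioo 0 (π / 2)) :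
    ampA θ ^ 2 + ampB θ ^ 2 = 1 := by
  have := tan_pos_of_pos_of_lt_pi_div_two hθ.1 hθ.2
  rw [ampA_sq hθ, ampB_sq hθ]
  field_simp

theorem ampB_sq_eq_tan_mul {θ : ℝ} (hθ : θ ∈ Set.Ioo 0 (π / 2)) :
    ampB θ ^ 2 = tan θ * ampA θ ^ 2 := by
  rw [ampA_sq hθ, ampB_sq hθ, mul_one_div]

theorem ampA_pow_four {θ : ℝ} (hθ : θ ∈ Set.Ioo 0 (π / 2)) :
    ampA θ ^ 4 = 1 / (1 + tan θ) ^ 2 := by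
  rw [show ampA θ ^ 4 = (ampA θ ^ 2) ^ 2 by ring, ampA_sq hθ, div_pow, one_pow]

theorem sin_mul_ampA_sq {θ : ℝ} (hθ : θ ∈ Set.Ioo 0 (π / 2)) :
    sin θ * ampA θ ^ 2 = cos θ * ampB θ ^ 2 := by
  have hcos : 0 < cos θ := cos_pos_of_mem_Ioo ⟨by linarith [hθ.1, pi_pos], hθ.2⟩
  rw [ampB_sq_eq_tan_mul hθ, tan_eq_sin_div_cos]
  field_simp

end Amplitudes

theorem star_prodVec_dotProduct_self (θ : ℝ) {u v : ℂ} (hu : ‖u‖ = 1) (hv : ‖v‖ = 1)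
    (hab : ampA θ ^ 2 + ampB θ ^ 2 = 1) :
    star (prodVec θ u v) ⬝ᵥ prodVec θ u v = 1 := by
  have hu' : starRingEnd ℂ u * u = 1 := by rw [Complex.conj_mul', hu]; norm_num
  have hv' : starRingEnd ℂ v * v = 1 := by rw [Complex.conj_mul', hv]; norm_num
  have hab' : (ampA θ : ℂ) ^ 2 + (ampB θ : ℂ) ^ 2 = 1 := by exact_mod_cast hab
  simp only [dotProduct, Pi.star_apply, prodVec, mul_ite, ite_mul, RCLike.star_def,
    Fintype.sum_prod_type, Fin.sum_univ_two, Fin.isValue, ↓reduceIte, one_ne_zero, map_mul,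
    Complex.conj_ofReal]
  grind

theorem star_psiTheta_dotProduct_prodVec (θ : ℝ) (u v : ℂ) :
    star (psiTheta θ) ⬝ᵥ prodVec θ u v
      = Real.sin θ * ampA θ ^ 2 + Real.cos θ * ampB θ ^ 2 * (u * v) := by
  simp only [dotProduct, Pi.star_apply, psiTheta, RCLike.star_def, prodVec, mul_ite, ite_mul,
    Fintype.sum_prod_type, Prod.mk.injEq, Fin.sum_univ_two, Fin.isValue, ↓reduceIte, and_true,
    zero_ne_one, and_false, one_ne_zero, Complex.conj_ofReal, map_zero, zero_mul, add_zero,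
    zero_add]
  ring

theorem star_psiTheta_dotProduct_prodVec_eq_zero {θ : ℝ} (hθ : θ ∈ Set.Ioo 0 (Real.pi / 2))
    {u v : ℂ} (huv : u * v = -1) : star (psiTheta θ) ⬝ᵥ prodVec θ u v = 0 := by
  have h : (Real.sin θ * ampA θ ^ 2 : ℂ) = Real.cos θ * ampB θ ^ 2 := by
    exact_mod_cast sin_mul_ampA_sq hθ
  rw [star_psiTheta_dotProduct_prodVec, huv]
  linear_combination h

theorem third_smul_sum_vecMulVec_prodVec {ω : ℂ} (hω : IsPrimitiveRoot ω 3) (θ t : ℝ)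
    (hab : ampB θ ^ 2 = t * ampA θ ^ 2) :
    (1/3 : ℂ) • (vecMulVec (prodVec θ ω (-ω ^ 2)) (star (prodVec θ ω (-ω ^ 2)))
      + vecMulVec (prodVec θ (ω ^ 2) (-ω)) (star (prodVec θ (ω ^ 2) (-ω)))
      + vecMulVec (prodVec θ 1 (-1)) (star (prodVec θ 1 (-1))))
      = ((ampA θ ^ 4 : ℝ) : ℂ) • Nmat t := by
  have hω2 := hω.sq_add_self_add_one
  have hconj : starRingEnd ℂ ω = ω ^ 2 := hω.star_eq_sq
  have hab' : (ampB θ : ℂ) ^ 2 = t * ampA θ ^ 2 := by exact_mod_cast hab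
  ext ⟨i, j⟩ ⟨k, l⟩
  fin_cases i <;> fin_cases j <;> fin_cases k <;> fin_cases l <;>
    simp only [Matrix.smul_apply, Matrix.add_apply, vecMulVec_apply, Pi.star_apply,
      Complex.star_def, prodVec, Nmat, of_apply, map_mul, map_neg, map_pow, map_one,
      Complex.conj_ofReal, Complex.ofReal_pow, Complex.ofReal_neg, hconj, smul_eq_mul,
      Fin.zero_eta, Fin.mk_one, Fin.isValue, Prod.mk.injEq, ↓reduceIte, one_ne_zero, zero_ne_one,
      and_true, and_false, or_false, false_or, and_self, or_self] <;>
    grind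

theorem stmt_14 (θ : ℝ) (hθ : θ ∈ Set.Ioo 0 (Real.pi / 2)) (t : ℝ) (ht : t = Real.tan θ) :
    star (phi1 θ) ⬝ᵥ phi1 θ = 1 ∧ star (phi2 θ) ⬝ᵥ phi2 θ = 1 ∧ star (phi3 θ) ⬝ᵥ phi3 θ = 1 ∧
    (1/3 : ℂ) • (vecMulVec (phi1 θ) (star (phi1 θ)) + vecMulVec (phi2 θ) (star (phi2 θ))
        + vecMulVec (phi3 θ) (star (phi3 θ)))
      = ((1 / (1 + t) ^ 2 : ℝ) : ℂ) • Nmat t ∧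
    (1/3 : ℂ) • (((1 : Matrix (Fin 2 × Fin 2) (Fin 2 × Fin 2) ℂ) - vecMulVec (phi1 θ) (star (phi1 θ)))
        + ((1 : Matrix (Fin 2 × Fin 2) (Fin 2 × Fin 2) ℂ) - vecMulVec (phi2 θ) (star (phi2 θ)))
        + ((1 : Matrix (Fin 2 × Fin 2) (Fin 2 × Fin 2) ℂ) - vecMulVec (phi3 θ) (star (phi3 θ))))
      = (1 : Matrix (Fin 2 × Fin 2) (Fin 2 × Fin 2) ℂ) - ((1 / (1 + t) ^ 2 : ℝ) : ℂ) • Nmat t ∧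
    star (psiTheta θ) ⬝ᵥ phi1 θ = 0 ∧ star (psiTheta θ) ⬝ᵥ phi2 θ = 0 ∧
    star (psiTheta θ) ⬝ᵥ phi3 θ = 0 := by
  have hω := isPrimitiveRoot_exp_two_pi_I_div_three
  have hω1 := hω.norm'_eq_one three_ne_zero
  have hω3 := hω.pow_eq_one
  have hab := ampA_sq_add_ampB_sq hθ
  have havg : (1/3 : ℂ) • (vecMulVec (phi1 θ) (star (phi1 θ)) + vecMulVec (phi2 θ) (star (phi2 θ))
      + vecMulVec (phi3 θ) (star (phi3 θ))) = ((1 / (1 + t) ^ 2 : ℝ) : ℂ) • Nmat t := by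
    rw [phi1_eq, phi2_eq, phi3, ht, ← ampA_pow_four hθ]
    exact third_smul_sum_vecMulVec_prodVec hω θ _ (ampB_sq_eq_tan_mul hθ)
  refine ⟨?_, ?_, ?_, havg, by rw [← havg]; module, ?_, ?_, ?_⟩
  · rw [phi1_eq]; exact star_prodVec_dotProduct_self θ hω1 (by simp [hω1]) hab
  · rw [phi2_eq]; exact star_prodVec_dotProduct_self θ (by simp [hω1]) (by simp [hω1]) hab
  · exact star_prodVec_dotProduct_self θ (by simp) (by simp) hab
  · rw [phi1_eq]; exact star_psiTheta_dotProduct_prodVec_eq_zero hθ (by linear_combination -hω3)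
  · rw [phi2_eq]; exact star_psiTheta_dotProduct_prodVec_eq_zero hθ (by linear_combination -hω3)
  · exact star_psiTheta_dotProduct_prodVec_eq_zero hθ (by ring)
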